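/- For every prime p and every positive integer n, one has the identity in ℚ: C(n·p, p) = n · Σ_{j=0}^{p−1} ((n−1)·p)^j · H_{p−1}(1^j). -/

import Mathlib

/-!
`H_N(1^j)` is the `j`-th elementary symmetric function of `1, 1/2, …, 1/N`, so
`∑ⱼ xʲ H_N(1^j) = ∏_{i ≤ N} (1 + x/i)`. At `x = m` a natural number this product is
`(m+1)⋯(m+N)/N! = C(m+N, N)`; with `m = (n-1)p`, `N = p-1` this is `C(np-1, p-1)`, and
`C(np, p) = n · C(np-1, p-1)`.
-/

/-- Multiple harmonic sum `H_N(s₁,…,s_k)`. -/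
def mhs : ℕ → List ℕ → ℚ
  | _, [] => 1
  | N, s :: t => ∑ n ∈ Finset.Icc 1 N, (1 / (n : ℚ) ^ s) * mhs (n - 1) t

open Finset

theorem mhs_succ_cons (N s : ℕ) (t : List ℕ) :
    mhs (N + 1) (s :: t) = mhs N (s :: t) + mhs N t / (N + 1) ^ s := by
  rw [mhs, mhs, sum_Icc_succ_top (by omega)]
  simp [div_eq_inv_mul]

theorem mhs_eq_zero_of_lt_length {N : ℕ} {l : List ℕ} (h : N < l.length) : mhs N l = 0 := by
  induction N generalizing l with
  | zero =>
    obtain ⟨s, t, rfl⟩ := List.exists_cons_of_length_pos h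
    simp [mhs]
  | succ N ih =>
    obtain ⟨s, t, rfl⟩ := List.exists_cons_of_length_pos (by omega : 0 < l.length)
    simp only [List.length_cons] at h
    rw [mhs_succ_cons, ih (by rw [List.length_cons]; omega), ih (by omega), zero_div, add_zero]

theorem sum_pow_mul_mhs_replicate_one (x : ℚ) {N M : ℕ} (h : N < M) :
    ∑ j ∈ range M, x ^ j * mhs N (List.replicate j 1) = ∏ i ∈ range N, (1 + x / (i + 1)) := by
  induction N generalizing M with
  | zero =>
    obtain ⟨M, rfl⟩ := Nat.exists_eq_add_one.mpr h
    rw [sum_range_succ']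
    simp [List.replicate_succ, mhs]
  | succ N ih =>
    obtain ⟨M, rfl⟩ := Nat.exists_eq_add_one.mpr (by omega : 0 < M)
    have hsplit : ∀ j, x ^ (j + 1) * mhs (N + 1) (List.replicate (j + 1) 1) =
        x ^ (j + 1) * mhs N (List.replicate (j + 1) 1) +
          x / (N + 1) * (x ^ j * mhs N (List.replicate j 1)) := by
      intro j
      rw [List.replicate_succ, mhs_succ_cons]
      ring
    rw [sum_range_succ', sum_congr rfl fun j _ => hsplit j, sum_add_distrib, ← mul_sum,
      ih (by omega : N < M), prod_range_succ, ← ih (by omega : N < M + 1), sum_range_succ' _ M]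
    simp only [List.replicate_zero, mhs]
    ring

theorem prod_range_one_add_div_eq_choose (m N : ℕ) :
    ∏ i ∈ range N, (1 + (m : ℚ) / (i + 1)) = (m + N).choose N := by
  have hfactor : ∀ i ∈ range N,
      1 + (m : ℚ) / (i + 1) = ((m + 1 + i : ℕ) : ℚ) / ((i + 1 : ℕ) : ℚ) := by
    intro i _
    push_cast
    field_simp
    ring
  rw [prod_congr rfl hfactor, prod_div_distrib, ← Nat.cast_prod, ← Nat.cast_prod,
    ← Nat.ascFactorial_eq_prod_range, prod_range_add_one_eq_factorial,
    Nat.ascFactorial_eq_factorial_mul_choose, Nat.cast_mul]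
  field_simp

theorem choose_mul_eq_mul_choose (n p : ℕ) (hn : 1 ≤ n) (hp : 1 ≤ p) :
    (n * p).choose p = n * ((n - 1) * p + (p - 1)).choose (p - 1) := by
  have key := Nat.add_one_mul_choose_eq ((n - 1) * p + (p - 1)) (p - 1)
  have hnp : (n - 1) * p + (p - 1) + 1 = n * p := by
    obtain ⟨n, rfl⟩ := Nat.exists_eq_add_one.mpr hn
    obtain ⟨p, rfl⟩ := Nat.exists_eq_add_one.mpr hp
    rw [Nat.add_sub_cancel, Nat.add_sub_cancel]
    ring
  rw [hnp, Nat.sub_add_cancel hp] at key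
  apply Nat.eq_of_mul_eq_mul_right hp
  rw [← key]; ring

/-- For every prime `p` and positive integer `n`,
`C(np, p) = n · ∑_{j=0}^{p−1} ((n−1)p)^j · H_{p−1}(1^j)` in `ℚ`. -/
theorem choose_np_p_eq_mhs_series (p n : ℕ) (hp : p.Prime) (hn : 1 ≤ n) :
    (Nat.choose (n * p) p : ℚ) =
      (n : ℚ) * ∑ j ∈ Finset.range p,
        (((n : ℚ) - 1) * (p : ℚ)) ^ j * mhs (p - 1) (List.replicate j 1) := by
  have hx : ((n : ℚ) - 1) * p = ((n - 1) * p : ℕ) := by push_cast [Nat.cast_sub hn]; ring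
  rw [sum_pow_mul_mhs_replicate_one _ (Nat.sub_lt hp.pos one_pos), hx,
    prod_range_one_add_div_eq_choose, choose_mul_eq_mul_choose n p hn hp.one_le,
    Nat.cast_mul]
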